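/- Let κ₁, κ₂ be real numbers with κ₁ > 0 and κ₂ < κ₁, set θ₁ = (κ₁ − κ₂)/κ₁, and define f(x) = x · ln(1 − κ₁ + (κ₁ − κ₂)/x). Suppose z ≥ 0 is a real number satisfying z·e^z − e^z = κ₁ − 1, and set x* = (κ₁ − κ₂)/(e^z − 1 + κ₁). Then 0 < x* ≤ θ₁ and f′(x*) = 0. -/

import Mathlib

/-!
With `a = 1 - κ₁` and `c = κ₁ - κ₂`, the function is `x ↦ x * log (a + c / x)`, whose derivative is
`log u - (c / x) / u` for `u = a + c / x`. At `x = c / (exp z - a)` we have `u = exp z`, so the derivative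
is `z - 1 + a * exp (-z)`, which vanishes exactly when `z * exp z - exp z = -a`. The bounds on `x*`
follow from `exp z ≥ 1` for `z ≥ 0`.
-/

open Real

theorem hasDerivAt_mul_log_add_div {a c x : ℝ} (hx : x ≠ 0) (hu : a + c / x ≠ 0) :
    HasDerivAt (fun x => x * log (a + c / x)) (log (a + c / x) - c / x / (a + c / x)) x := by
  have hinner : HasDerivAt (fun x => a + c / x) (-(c / x ^ 2)) x := by
    simpa [div_eq_mul_inv] using ((hasDerivAt_inv hx).const_mul c).const_add a
  refine ((hasDerivAt_id' x).mul (hinner.log hu)).congr_deriv ?_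
  field_simp
  ring

theorem deriv_mul_log_add_div_eq_zero {a c z : ℝ} (hc : c ≠ 0) (hden : exp z - a ≠ 0)
    (hroot : z * exp z - exp z = -a) :
    deriv (fun x => x * log (a + c / x)) (c / (exp z - a)) = 0 := by
  have hcx : c / (c / (exp z - a)) = exp z - a := div_div_cancel₀ hc
  have hu : a + c / (c / (exp z - a)) = exp z := by rw [hcx]; ring
  have hx : c / (exp z - a) ≠ 0 := div_ne_zero hc hden
  rw [(hasDerivAt_mul_log_add_div hx (hu.symm ▸ (exp_pos z).ne')).deriv, hu, hcx, log_exp,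
    sub_eq_zero, eq_div_iff (exp_pos z).ne']
  linarith

/-- Closed-form critical point of Lemma 1. -/
theorem closed_form_critical_point
    (κ₁ κ₂ : ℝ) (hκ₁ : 0 < κ₁) (hκ : κ₂ < κ₁)
    (θ₁ : ℝ) (hθ₁ : θ₁ = (κ₁ - κ₂) / κ₁)
    (z : ℝ) (hz : 0 ≤ z) (hroot : z * Real.exp z - Real.exp z = κ₁ - 1)
    (xstar : ℝ) (hxstar : xstar = (κ₁ - κ₂) / (Real.exp z - 1 + κ₁)) :
    0 < xstar ∧ xstar ≤ θ₁ ∧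
      deriv (fun x : ℝ => x * Real.log (1 - κ₁ + (κ₁ - κ₂) / x)) xstar = 0 := by
  have hc : 0 < κ₁ - κ₂ := sub_pos.mpr hκ
  have hexp : 1 ≤ exp z := one_le_exp hz
  have hden : exp z - 1 + κ₁ = exp z - (1 - κ₁) := by ring
  subst hxstar hθ₁
  refine ⟨div_pos hc (by linarith), div_le_div_of_nonneg_left hc.le hκ₁ (by linarith), ?_⟩
  rw [hden]
  exact deriv_mul_log_add_div_eq_zero hc.ne' (by linarith) (by linarith)
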